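/- Let p : X → Y be a morphism between fibrant objects in a Quillen model category. If p has the right homotopy extension lifting property with respect to every cofibration (for a fixed path object Y^I of Y), then p is a weak equivalence. -/

import Mathlib

open CategoryTheory CategoryTheory.Limits

universe v u

/-- A Quillen (closed) model structure on a category `C`. -/
structure QuillenModelStructure (C : Type u) [Category.{v} C]
    [HasFiniteLimits C] [HasFiniteColimits C] where
  weq : MorphismProperty C
  fib : MorphismProperty C
  cof : MorphismProperty C
  weq_of_iso : ∀ {X Y : C} (f : X ⟶ Y), IsIso f → weq f
  fib_of_iso : ∀ {X Y : C} (f : X ⟶ Y), IsIso f → fib f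
  cof_of_iso : ∀ {X Y : C} (f : X ⟶ Y), IsIso f → cof f
  weq_comp : ∀ {X Y Z : C} (f : X ⟶ Y) (g : Y ⟶ Z), weq f → weq g → weq (f ≫ g)
  weq_of_comp_left : ∀ {X Y Z : C} (f : X ⟶ Y) (g : Y ⟶ Z), weq g → weq (f ≫ g) → weq f
  weq_of_comp_right : ∀ {X Y Z : C} (f : X ⟶ Y) (g : Y ⟶ Z), weq f → weq (f ≫ g) → weq g
  weq_retract : ∀ {X Y X' Y' : C} (f : X ⟶ Y) (f' : X' ⟶ Y')
    (iX : X' ⟶ X) (rX : X ⟶ X') (iY : Y' ⟶ Y) (rY : Y ⟶ Y'),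
    iX ≫ rX = 𝟙 X' → iY ≫ rY = 𝟙 Y' → iX ≫ f = f' ≫ iY → f ≫ rY = rX ≫ f' →
    weq f → weq f'
  fib_retract : ∀ {X Y X' Y' : C} (f : X ⟶ Y) (f' : X' ⟶ Y')
    (iX : X' ⟶ X) (rX : X ⟶ X') (iY : Y' ⟶ Y) (rY : Y ⟶ Y'),
    iX ≫ rX = 𝟙 X' → iY ≫ rY = 𝟙 Y' → iX ≫ f = f' ≫ iY → f ≫ rY = rX ≫ f' →
    fib f → fib f'
  cof_retract : ∀ {X Y X' Y' : C} (f : X ⟶ Y) (f' : X' ⟶ Y')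
    (iX : X' ⟶ X) (rX : X ⟶ X') (iY : Y' ⟶ Y) (rY : Y ⟶ Y'),
    iX ≫ rX = 𝟙 X' → iY ≫ rY = 𝟙 Y' → iX ≫ f = f' ≫ iY → f ≫ rY = rX ≫ f' →
    cof f → cof f'
  lift_cof_trivFib : ∀ {A B X Y : C} (i : A ⟶ B) (p : X ⟶ Y),
    cof i → fib p → weq p → HasLiftingProperty i p
  lift_trivCof_fib : ∀ {A B X Y : C} (i : A ⟶ B) (p : X ⟶ Y),
    cof i → weq i → fib p → HasLiftingProperty i p
  factor_cof_trivFib : ∀ {X Y : C} (f : X ⟶ Y), ∃ (Z : C) (i : X ⟶ Z) (q : Z ⟶ Y),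
    cof i ∧ fib q ∧ weq q ∧ i ≫ q = f
  factor_trivCof_fib : ∀ {X Y : C} (f : X ⟶ Y), ∃ (Z : C) (i : X ⟶ Z) (q : Z ⟶ Y),
    cof i ∧ weq i ∧ fib q ∧ i ≫ q = f

variable {C : Type u} [Category.{v} C] [HasFiniteLimits C] [HasFiniteColimits C]

/-- An object is fibrant if the map to the terminal object is a fibration. -/
def QuillenModelStructure.Fibrant (M : QuillenModelStructure C) (X : C) : Prop :=
  M.fib (terminal.from X)

/-- An object is cofibrant if the map from the initial object is a cofibration. -/
def QuillenModelStructure.Cofibrant (M : QuillenModelStructure C) (X : C) : Prop :=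
  M.cof (initial.to X)

/-!
Let `P = YI ×_Y X` be the mapping path object of `p`: paths in `Y` together with a lift of their
start point to `X`. The projection `P ⟶ X` is a base change of the start-point map `YI ⟶ Y`,
a trivial fibration because `Y` is fibrant; so it is a weak equivalence, and hence so is its
section `X ⟶ P` by constant paths. Right HELP for `p` is precisely the right lifting property
of the end-point map `P ⟶ Y` against cofibrations, so that map is a trivial fibration too.
As `p` is the section followed by the end-point map, `p` is a weak equivalence.
-/

open MorphismProperty

namespace QuillenModelStructure

variable (M : QuillenModelStructure C)

instance : M.weq.IsStableUnderRetracts where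
  of_retract h hg := M.weq_retract _ _ h.i.left h.r.left h.i.right h.r.right
    h.retract_left h.retract_right h.i_w h.r_w.symm hg

instance : M.fib.IsStableUnderRetracts where
  of_retract h hg := M.fib_retract _ _ h.i.left h.r.left h.i.right h.r.right
    h.retract_left h.retract_right h.i_w h.r_w.symm hg

instance : HasFactorization M.cof (M.fib ⊓ M.weq) where
  nonempty_mapFactorizationData f := by
    obtain ⟨Z, i, q, hi, hq, hwq, fac⟩ := M.factor_cof_trivFib f
    exact ⟨{ Z, i, p := q, fac, hi, hp := ⟨hq, hwq⟩ }⟩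

instance : HasFactorization (M.cof ⊓ M.weq) M.fib where
  nonempty_mapFactorizationData f := by
    obtain ⟨Z, i, q, hi, hwi, hq, fac⟩ := M.factor_trivCof_fib f
    exact ⟨{ Z, i, p := q, fac, hi := ⟨hi, hwi⟩, hp := hq }⟩

lemma rlp_cof : M.cof.rlp = M.fib ⊓ M.weq :=
  rlp_eq_of_le_rlp_of_hasFactorization_of_isStableUnderRetracts
    fun _ _ q hq _ _ i hi => M.lift_cof_trivFib i q hi hq.1 hq.2

lemma rlp_cof_inf_weq : (M.cof ⊓ M.weq).rlp = M.fib :=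
  rlp_eq_of_le_rlp_of_hasFactorization_of_isStableUnderRetracts
    fun _ _ q hq _ _ i hi => M.lift_trivCof_fib i q hi.1 hi.2 hq

variable {M}

lemma weq_id (X : C) : M.weq (𝟙 X) :=
  M.weq_of_iso _ inferInstance

lemma weq_of_comp_eq_id {X P : C} {s : X ⟶ P} {r : P ⟶ X} (hr : M.weq r) (hsr : s ≫ r = 𝟙 X) :
    M.weq s :=
  M.weq_of_comp_left s r hr (hsr ▸ weq_id X)

lemma weq_of_rlp_cof {X Y : C} {q : X ⟶ Y} (hq : M.cof.rlp q) : M.weq q := by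
  rw [rlp_cof] at hq
  exact hq.2

lemma fib_comp {X Y Z : C} {f : X ⟶ Y} {g : Y ⟶ Z} (hf : M.fib f) (hg : M.fib g) :
    M.fib (f ≫ g) := by
  rw [← rlp_cof_inf_weq] at hf hg ⊢
  exact comp_mem _ f g hf hg

lemma fib_prod_fst {W Z : C} (hZ : M.Fibrant Z) : M.fib (prod.fst : W ⨯ Z ⟶ W) := by
  rw [Fibrant, ← rlp_cof_inf_weq] at hZ
  rw [← rlp_cof_inf_weq]
  exact of_isPullback (IsPullback.of_hasBinaryProduct' W Z).flip hZ

lemma rlp_cof_pathObject_fst {Y YI : C} {j : Y ⟶ YI} {π : YI ⟶ Y ⨯ Y} (hY : M.Fibrant Y)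
    (hj : M.weq j) (hπ : M.fib π) (hfact : j ≫ π = prod.lift (𝟙 Y) (𝟙 Y)) :
    M.cof.rlp (π ≫ prod.fst) := by
  rw [rlp_cof]
  refine ⟨fib_comp hπ (fib_prod_fst hY), M.weq_of_comp_right j _ hj ?_⟩
  simpa [reassoc_of% hfact, prod.lift_fst] using weq_id Y

variable (M) in
def HasRightHELP {X Y YI : C} (p : X ⟶ Y) (π : YI ⟶ Y ⨯ Y) : Prop :=
  ∀ {A B : C} (i : A ⟶ B), M.cof i →
    ∀ (fA : A ⟶ X) (g : B ⟶ Y) (hA : A ⟶ YI),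
      hA ≫ π = prod.lift (fA ≫ p) (i ≫ g) →
      ∃ (f : B ⟶ X) (h : B ⟶ YI),
        i ≫ f = fA ∧ i ≫ h = hA ∧ h ≫ π = prod.lift (f ≫ p) g

lemma rlp_cof_mappingPathEnd_of_hasRightHELP {X Y YI : C} {p : X ⟶ Y} {π : YI ⟶ Y ⨯ Y}
    (help : M.HasRightHELP p π) :
    M.cof.rlp (pullback.fst (π ≫ prod.fst) p ≫ π ≫ prod.snd) := by
  intro A B i hi
  refine ⟨fun {u g} sq => ?_⟩
  obtain ⟨f, h, hf, hh, hhπ⟩ :=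
    help i hi (u ≫ pullback.snd _ _) g (u ≫ pullback.fst _ _) (by
      ext
      · simp [pullback.condition, prod.lift_fst]
      · simpa [prod.lift_snd] using sq.w)
  have hstart : h ≫ π ≫ prod.fst = f ≫ p := by simp [reassoc_of% hhπ, prod.lift_fst]
  exact ⟨⟨{ l := pullback.lift h f hstart
            fac_left := by ext <;> simp [hf, hh, pullback.lift_fst, pullback.lift_snd]
            fac_right := by simp [reassoc_of% hhπ, prod.lift_snd, pullback.lift_fst_assoc] }⟩⟩

end QuillenModelStructure

open QuillenModelStructure in
theorem weq_of_right_HELP_general (M : QuillenModelStructure C) {X Y : C}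
    (p : X ⟶ Y) (hY : M.Fibrant Y)
    (YI : C) (j : Y ⟶ YI) (π : YI ⟶ Y ⨯ Y)
    (hj : M.weq j) (hπ : M.fib π) (hfact : j ≫ π = prod.lift (𝟙 Y) (𝟙 Y))
    (help : ∀ {A B : C} (i : A ⟶ B), M.cof i →
      ∀ (fA : A ⟶ X) (g : B ⟶ Y) (hA : A ⟶ YI),
        hA ≫ π = prod.lift (fA ≫ p) (i ≫ g) →
        ∃ (f : B ⟶ X) (h : B ⟶ YI),
          i ≫ f = fA ∧ i ≫ h = hA ∧ h ≫ π = prod.lift (f ≫ p) g) :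
    M.weq p := by
  have hstart := rlp_cof_pathObject_fst hY hj hπ hfact
  have hproj : M.weq (pullback.snd (π ≫ prod.fst) p) := weq_of_rlp_cof (pullback_snd _ _ hstart)
  have hend := weq_of_rlp_cof (rlp_cof_mappingPathEnd_of_hasRightHELP help)
  let s : X ⟶ pullback (π ≫ prod.fst) p :=
    pullback.lift (p ≫ j) (𝟙 X) (by simp [reassoc_of% hfact, prod.lift_fst])
  have hs : M.weq s := weq_of_comp_eq_id hproj (by simp [s, pullback.lift_snd])
  have hfac : s ≫ pullback.fst _ _ ≫ π ≫ prod.snd = p := by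
    simp [s, reassoc_of% hfact, prod.lift_snd, pullback.lift_fst_assoc]
  exact hfac ▸ M.weq_comp _ _ hs hend

/-- Converse HELP lemma: a map of fibrant objects with the right homotopy extension
lifting property with respect to all cofibrations is a weak equivalence. -/
theorem weq_of_right_HELP (M : QuillenModelStructure C) {X Y : C}
    (p : X ⟶ Y) (hX : M.Fibrant X) (hY : M.Fibrant Y)
    (YI : C) (j : Y ⟶ YI) (π : YI ⟶ Y ⨯ Y)
    (hj : M.weq j) (hπ : M.fib π) (hfact : j ≫ π = prod.lift (𝟙 Y) (𝟙 Y))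
    (help : ∀ {A B : C} (i : A ⟶ B), M.cof i →
      ∀ (fA : A ⟶ X) (g : B ⟶ Y) (hA : A ⟶ YI),
        hA ≫ π = prod.lift (fA ≫ p) (i ≫ g) →
        ∃ (f : B ⟶ X) (h : B ⟶ YI),
          i ≫ f = fA ∧ i ≫ h = hA ∧ h ≫ π = prod.lift (f ≫ p) g) :
    M.weq p :=
  weq_of_right_HELP_general M p hY YI j π hj hπ hfact help
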